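/- Let K₁, K₂ be positive semidefinite kernels on finite sets Σ₁, Σ₂ with Σ₁ ∩ Σ₂ = {x₀} and K₁(x₀,x₀) = K₂(x₀,x₀) = 1. Write L_i(s,t) = K_i(s,t) − K_i(s,x₀)K_i(x₀,t) for s,t ∈ Σ_i \ {x₀}, and let L be the block-diagonal kernel on (Σ₁ ∪ Σ₂) \ {x₀} equal to L_i on (Σ_i \ {x₀})² and zero on cross blocks. Let v : Σ₁ ∪ Σ₂ → ℂ be v(σ) = K₁(σ,x₀) for σ ∈ Σ₁ and v(σ) = conj(K₂(x₀,σ)) for σ ∈ Σ₂. Then for all σ, τ ∈ Σ₁ ∪ Σ₂: (K₁ *_{x₀} K₂)(σ,τ) = L̃(σ,τ) + v(σ)·conj(v(τ)), where L̃ extends L by zero to rows/columns indexed by x₀. In particular K₁ *_{x₀} K₂ is positive semidefinite, being the sum of two positive semidefinite kernels. -/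

import Mathlib

/-!
Off the diagonal blocks the Markov product factors through `x₀`, so subtracting the rank-one
kernel `v(σ) conj(v(τ))` kills the cross blocks and leaves on `Σᵢ × Σᵢ` the Schur complement
`Kᵢ(s,t) - Kᵢ(s,x₀) Kᵢ(x₀,t)`. Since `Kᵢ(x₀,x₀) = 1`, this is the Schur complement of the
`1 × 1` corner in the Gram matrix of `x₀, σ₁, …, σ_k`, hence positive semidefinite, and so is its
extension by zero. The Markov product is therefore a sum of three positive semidefinite kernels.
-/

open Matrix ComplexOrder

/-- A kernel `K` is positive semidefinite on a set `S` if every finite Gram matrix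
built from points of `S` is positive semidefinite. -/
def IsPosSemidefKernelOn {X : Type*} (S : Set X) (K : X → X → ℂ) : Prop :=
  ∀ (k : ℕ) (σ : Fin k → X), (∀ i, σ i ∈ S) →
    (Matrix.of fun i j => K (σ i) (σ j)).PosSemidef

/-- The Markov product of two kernels `K₁`, `K₂` on sets `S₁`, `S₂` meeting at `x₀`. -/
noncomputable def markovProduct {X : Type*} (S₁ : Set X) (x₀ : X)
    (K₁ K₂ : X → X → ℂ) : X → X → ℂ := fun σ τ =>
  open scoped Classical in
  if σ ∈ S₁ then
    if τ ∈ S₁ then K₁ σ τ else K₁ σ x₀ * K₂ x₀ τ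
  else
    if τ ∈ S₁ then (starRingEnd ℂ) (K₁ τ x₀ * K₂ x₀ σ) else K₂ σ τ

/-- The block-diagonal Schur-complement kernel `L`, extended by zero to `x₀`. -/
noncomputable def schurBlockKernel {X : Type*} (S₁ S₂ : Set X) (x₀ : X)
    (K₁ K₂ : X → X → ℂ) : X → X → ℂ := fun σ τ =>
  open scoped Classical in
  if σ = x₀ ∨ τ = x₀ then 0
  else if σ ∈ S₁ ∧ τ ∈ S₁ then K₁ σ τ - K₁ σ x₀ * K₁ x₀ τ
  else if σ ∈ S₂ ∧ τ ∈ S₂ then K₂ σ τ - K₂ σ x₀ * K₂ x₀ τ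
  else 0

/-- The rank-one vector `v`. -/
noncomputable def rankOneVec {X : Type*} (S₁ : Set X) (x₀ : X)
    (K₁ K₂ : X → X → ℂ) : X → ℂ := fun σ =>
  open scoped Classical in
  if σ ∈ S₁ then K₁ σ x₀ else (starRingEnd ℂ) (K₂ x₀ σ)

open ComplexConjugate

noncomputable def kernelIndicator {X : Type*} (T : Set X) (K : X → X → ℂ) : X → X → ℂ :=
  fun s t => open scoped Classical in if s ∈ T ∧ t ∈ T then K s t else 0

def schurComplementKernel {X : Type*} (K : X → X → ℂ) (x₀ : X) : X → X → ℂ :=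
  fun s t => K s t - K s x₀ * K x₀ t

namespace IsPosSemidefKernelOn

variable {X : Type*} {S T : Set X} {K L : X → X → ℂ}

theorem posSemidef_gram {ι : Type*} [Finite ι] (h : IsPosSemidefKernelOn S K) {σ : ι → X}
    (hσ : ∀ i, σ i ∈ S) : (Matrix.of fun i j => K (σ i) (σ j)).PosSemidef := by
  obtain ⟨k, ⟨e⟩⟩ := Finite.exists_equiv_fin ι
  exact (posSemidef_submatrix_equiv e.symm).mp (h k (σ ∘ e.symm) fun i => hσ _)

theorem conj_apply (h : IsPosSemidefKernelOn S K) {s t : X} (hs : s ∈ S) (ht : t ∈ S) :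
    conj (K s t) = K t s := by
  simpa using congr_fun₂ (h 2 ![s, t] (Fin.forall_fin_two.mpr ⟨hs, ht⟩)).1 1 0

theorem congr (h : IsPosSemidefKernelOn S K) (hKL : ∀ s ∈ S, ∀ t ∈ S, K s t = L s t) :
    IsPosSemidefKernelOn S L := fun k σ hσ => by
  convert h k σ hσ using 1
  ext i j
  exact (hKL _ (hσ i) _ (hσ j)).symm

theorem add (hK : IsPosSemidefKernelOn S K) (hL : IsPosSemidefKernelOn S L) :
    IsPosSemidefKernelOn S (K + L) := fun k σ hσ => (hK k σ hσ).add (hL k σ hσ)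

theorem _root_.isPosSemidefKernelOn_rankOne (v : X → ℂ) (S : Set X) :
    IsPosSemidefKernelOn S fun s t => v s * conj (v t) := fun _ σ _ =>
  posSemidef_vecMulVec_self_star (v ∘ σ)

theorem kernelIndicator (h : IsPosSemidefKernelOn T K) (S : Set X) :
    IsPosSemidefKernelOn S (kernelIndicator T K) := by
  classical
  intro k σ _
  rcases T.eq_empty_or_nonempty with rfl | ⟨t₀, ht₀⟩
  · simp only [_root_.kernelIndicator, Set.mem_empty_iff_false, false_and, if_false]
    exact .zero
  -- Points outside `T` are moved to `t₀`; the indicator `χ` then erases their rows and columns.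
  let χ : Fin k → ℂ := fun i => if σ i ∈ T then 1 else 0
  have hG := h k (fun i => if σ i ∈ T then σ i else t₀) fun i => by split_ifs <;> assumption
  convert hG.mul_mul_conjTranspose_same (diagonal χ) using 1
  ext i j
  by_cases hi : σ i ∈ T <;> by_cases hj : σ j ∈ T <;> simp [χ, hi, hj, _root_.kernelIndicator]

theorem schurComplementKernel {x₀ : X} (h : IsPosSemidefKernelOn S K) (hx₀ : x₀ ∈ S)
    (h₀ : K x₀ x₀ = 1) : IsPosSemidefKernelOn S (schurComplementKernel K x₀) := by
  intro k σ hσ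
  set σ₀ : Unit ⊕ Fin k → X := Sum.elim (fun _ => x₀) σ
  have hG := h.posSemidef_gram (σ := σ₀) (by rintro (_ | i) <;> simp [σ₀, hx₀, hσ])
  let B : Matrix Unit (Fin k) ℂ := of fun _ j => K x₀ (σ j)
  have hblocks : (of fun i j => K (σ₀ i) (σ₀ j)) =
      fromBlocks 1 B Bᴴ (of fun i j => K (σ i) (σ j)) := by
    ext (_ | i) (_ | j) <;> simp [σ₀, B, h₀, h.conj_apply hx₀ (hσ _)]
  let _ : Invertible (1 : Matrix Unit Unit ℂ) := invertibleOne
  rw [hblocks, PosDef.fromBlocks₁₁ B _ (PosDef.one (n := Unit) (R := ℂ)), inv_one,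
    Matrix.mul_one] at hG
  have hschur : (of fun i j => _root_.schurComplementKernel K x₀ (σ i) (σ j)) =
      (of fun i j => K (σ i) (σ j)) - Bᴴ * B := by
    ext i j
    simp [B, _root_.schurComplementKernel, Matrix.mul_apply, ← h.conj_apply hx₀ (hσ _)]
  rwa [hschur]

end IsPosSemidefKernelOn

section MarkovProduct

variable {X : Type*} {S₁ S₂ : Set X} {x₀ : X} {K₁ K₂ : X → X → ℂ}

theorem kernelIndicator_schurComplementKernel_eq_zero_left {T : Set X} {K : X → X → ℂ}
    (h₀ : K x₀ x₀ = 1) {s : X} (hs : s ∈ T → s = x₀) (t : X) :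
    kernelIndicator T (schurComplementKernel K x₀) s t = 0 := by
  unfold kernelIndicator
  split_ifs with hst
  · simp [schurComplementKernel, hs hst.1, h₀]
  · rfl

theorem kernelIndicator_schurComplementKernel_eq_zero_right {T : Set X} {K : X → X → ℂ}
    (h₀ : K x₀ x₀ = 1) (s : X) {t : X} (ht : t ∈ T → t = x₀) :
    kernelIndicator T (schurComplementKernel K x₀) s t = 0 := by
  unfold kernelIndicator
  split_ifs with hst
  · simp [schurComplementKernel, ht hst.2, h₀]
  · rfl

theorem schurBlockKernel_eq_add (hint : S₁ ∩ S₂ = {x₀}) (h₁₀ : K₁ x₀ x₀ = 1)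
    (h₂₀ : K₂ x₀ x₀ = 1) :
    schurBlockKernel S₁ S₂ x₀ K₁ K₂ =
      kernelIndicator S₁ (schurComplementKernel K₁ x₀) +
        kernelIndicator S₂ (schurComplementKernel K₂ x₀) := by
  have hmem {s : X} (h₁ : s ∈ S₁) (h₂ : s ∈ S₂) : s = x₀ := hint.subset ⟨h₁, h₂⟩
  funext σ τ
  rw [Pi.add_apply, Pi.add_apply]
  by_cases hx₀ : σ = x₀ ∨ τ = x₀
  · rcases hx₀ with rfl | rfl
    · rw [kernelIndicator_schurComplementKernel_eq_zero_left h₁₀ fun _ => rfl,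
        kernelIndicator_schurComplementKernel_eq_zero_left h₂₀ fun _ => rfl]
      simp [schurBlockKernel]
    · rw [kernelIndicator_schurComplementKernel_eq_zero_right h₁₀ _ fun _ => rfl,
        kernelIndicator_schurComplementKernel_eq_zero_right h₂₀ _ fun _ => rfl]
      simp [schurBlockKernel]
  · simp only [schurBlockKernel, if_neg hx₀, kernelIndicator, schurComplementKernel]
    split_ifs with h₁ h₂ h₂
    · exact absurd (Or.inl (hmem h₁.1 h₂.1)) hx₀
    all_goals simp

theorem markovProduct_eq_schurBlockKernel_add (hint : S₁ ∩ S₂ = {x₀})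
    (h₁ : IsPosSemidefKernelOn S₁ K₁) (h₂ : IsPosSemidefKernelOn S₂ K₂)
    (h₁₀ : K₁ x₀ x₀ = 1) (h₂₀ : K₂ x₀ x₀ = 1) {σ τ : X} (hσ : σ ∈ S₁ ∪ S₂)
    (hτ : τ ∈ S₁ ∪ S₂) :
    markovProduct S₁ x₀ K₁ K₂ σ τ =
      schurBlockKernel S₁ S₂ x₀ K₁ K₂ σ τ +
        rankOneVec S₁ x₀ K₁ K₂ σ * conj (rankOneVec S₁ x₀ K₁ K₂ τ) := by
  have hmem {s : X} (h₁ : s ∈ S₁) (h₂ : s ∈ S₂) : s = x₀ := hint.subset ⟨h₁, h₂⟩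
  have hx₀ : x₀ ∈ S₁ ∩ S₂ := hint ▸ rfl
  rw [schurBlockKernel_eq_add hint h₁₀ h₂₀, Pi.add_apply, Pi.add_apply]
  by_cases hσ₁ : σ ∈ S₁ <;> by_cases hτ₁ : τ ∈ S₁
  · rw [kernelIndicator_schurComplementKernel_eq_zero_left h₂₀ (hmem hσ₁)]
    simp only [markovProduct, rankOneVec, kernelIndicator, schurComplementKernel, hσ₁, hτ₁,
      and_self, if_true, h₁.conj_apply hτ₁ hx₀.1]
    ring
  · rw [kernelIndicator_schurComplementKernel_eq_zero_right h₁₀ σ (absurd · hτ₁),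
      kernelIndicator_schurComplementKernel_eq_zero_left h₂₀ (hmem hσ₁)]
    simp [markovProduct, rankOneVec, hσ₁, hτ₁]
  · rw [kernelIndicator_schurComplementKernel_eq_zero_left h₁₀ (absurd · hσ₁),
      kernelIndicator_schurComplementKernel_eq_zero_right h₂₀ σ (hmem hτ₁)]
    simp [markovProduct, rankOneVec, hσ₁, hτ₁, mul_comm]
  · have hσ₂ := hσ.resolve_left hσ₁
    have hτ₂ := hτ.resolve_left hτ₁
    rw [kernelIndicator_schurComplementKernel_eq_zero_left h₁₀ (absurd · hσ₁)]
    simp only [markovProduct, rankOneVec, kernelIndicator, schurComplementKernel, if_neg hσ₁,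
      if_neg hτ₁, hσ₂, hτ₂, and_self, if_true, h₂.conj_apply hx₀.2 hσ₂,
      RingHomCompTriple.comp_apply, RingHom.id_apply]
    ring

end MarkovProduct

theorem markovProduct_decomposition_general
    {X : Type*} (S₁ S₂ : Set X) (x₀ : X)
    (hint : S₁ ∩ S₂ = {x₀})
    (K₁ K₂ : X → X → ℂ)
    (h₁ : IsPosSemidefKernelOn S₁ K₁) (h₂ : IsPosSemidefKernelOn S₂ K₂)
    (h₁₀ : K₁ x₀ x₀ = 1) (h₂₀ : K₂ x₀ x₀ = 1) :
    (∀ σ ∈ S₁ ∪ S₂, ∀ τ ∈ S₁ ∪ S₂,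
      markovProduct S₁ x₀ K₁ K₂ σ τ =
        schurBlockKernel S₁ S₂ x₀ K₁ K₂ σ τ +
          rankOneVec S₁ x₀ K₁ K₂ σ * (starRingEnd ℂ) (rankOneVec S₁ x₀ K₁ K₂ τ)) ∧
    IsPosSemidefKernelOn (S₁ ∪ S₂) (markovProduct S₁ x₀ K₁ K₂) := by
  have hx₀ : x₀ ∈ S₁ ∩ S₂ := hint ▸ rfl
  have hdecomp : ∀ σ ∈ S₁ ∪ S₂, ∀ τ ∈ S₁ ∪ S₂, _ := fun σ hσ τ hτ =>
    markovProduct_eq_schurBlockKernel_add hint h₁ h₂ h₁₀ h₂₀ hσ hτ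
  refine ⟨hdecomp, ?_⟩
  rw [schurBlockKernel_eq_add hint h₁₀ h₂₀] at hdecomp
  have hL₁ := (h₁.schurComplementKernel hx₀.1 h₁₀).kernelIndicator (S₁ ∪ S₂)
  have hL₂ := (h₂.schurComplementKernel hx₀.2 h₂₀).kernelIndicator (S₁ ∪ S₂)
  exact ((hL₁.add hL₂).add (isPosSemidefKernelOn_rankOne _ _)).congr fun σ hσ τ hτ =>
    (hdecomp σ hσ τ hτ).symm

theorem markovProduct_decomposition
    {X : Type*} (S₁ S₂ : Set X) (x₀ : X)
    (hfin₁ : S₁.Finite) (hfin₂ : S₂.Finite) (hint : S₁ ∩ S₂ = {x₀})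
    (K₁ K₂ : X → X → ℂ)
    (h₁ : IsPosSemidefKernelOn S₁ K₁) (h₂ : IsPosSemidefKernelOn S₂ K₂)
    (h₁₀ : K₁ x₀ x₀ = 1) (h₂₀ : K₂ x₀ x₀ = 1) :
    (∀ σ ∈ S₁ ∪ S₂, ∀ τ ∈ S₁ ∪ S₂,
      markovProduct S₁ x₀ K₁ K₂ σ τ =
        schurBlockKernel S₁ S₂ x₀ K₁ K₂ σ τ +
          rankOneVec S₁ x₀ K₁ K₂ σ * (starRingEnd ℂ) (rankOneVec S₁ x₀ K₁ K₂ τ)) ∧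
    IsPosSemidefKernelOn (S₁ ∪ S₂) (markovProduct S₁ x₀ K₁ K₂) :=
  markovProduct_decomposition_general S₁ S₂ x₀ hint K₁ K₂ h₁ h₂ h₁₀ h₂₀
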